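/- Let q = p^t with p an odd prime and t ≥ 2, n = q+1, a = n/2, and let r, m be integers with r ≥ 1, m ≥ 2, and 3 ≤ r+m ≤ a−1. Then there exists a convolutional code over F_q with parameters (n, 2r+1, 2m; m, d_f) whose free distance satisfies d_f ≥ n − 2(r+m). -/

import Mathlib

/-!
With `K = 2(r + m) + 1 ≤ q`, let `M` be the `K × n` generator matrix of the doubly extended
Reed–Solomon code over `F`, an MDS code: every nonzero combination of its rows has weight at least
`n - (K - 1) = n - 2(r + m)`. Take row degrees `γ = (m, m, 0, …, 0)`, so that `∑ (γᵢ + 1) = K`, and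
build `G` by giving row `i` the coefficients `M_{φ(i,0)}, …, M_{φ(i,γᵢ)}` for an injection `φ`.
Every coefficient vector of a codeword `u G` is a combination of rows of `M`, which gives the
distance bound. A right inverse of `M` yields a constant right inverse of `G`, so `G` is basic.
The leading row coefficients of `G` are distinct rows of `M`, hence independent, so `G` has the
predictable degree property; if `U G` is another basic generator of the same code then `U` is
invertible, and a permutation `σ` with `U (σ i) i ≠ 0`, read off from `det U ≠ 0`, shows that the
row degrees of `U G` dominate those of `G`.
-/

/-- The convolutional code generated by the polynomial matrix `G`. -/
def convCode {F : Type*} [Field F] {k n : ℕ}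
    (G : Matrix (Fin k) (Fin n) (Polynomial F)) : Set (Fin n → Polynomial F) :=
  {v | ∃ u : Fin k → Polynomial F, ∀ j, v j = ∑ i : Fin k, u i * G i j}

/-- A polynomial generator matrix is basic if it has a polynomial right inverse. -/
def isBasic {F : Type*} [Field F] {k n : ℕ}
    (G : Matrix (Fin k) (Fin n) (Polynomial F)) : Prop :=
  ∃ R : Matrix (Fin n) (Fin k) (Polynomial F), G * R = 1

/-- The `i`-th constraint length: the maximal degree in row `i`. -/
def rowDegree {F : Type*} [Field F] {k n : ℕ}
    (G : Matrix (Fin k) (Fin n) (Polynomial F)) (i : Fin k) : ℕ :=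
  Finset.univ.sup fun j => (G i j).natDegree

/-- The degree (overall constraint length) `γ = ∑ γ_i` of a generator matrix. -/
def convDegree {F : Type*} [Field F] {k n : ℕ}
    (G : Matrix (Fin k) (Fin n) (Polynomial F)) : ℕ :=
  ∑ i : Fin k, rowDegree G i

/-- The memory `m = max γ_i` of a generator matrix. -/
def convMemory {F : Type*} [Field F] {k n : ℕ}
    (G : Matrix (Fin k) (Fin n) (Polynomial F)) : ℕ :=
  Finset.univ.sup fun i => rowDegree G i

/-- A basic generator matrix is reduced if its overall constraint length is minimal
among all basic generator matrices of the same code. -/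
def isReduced {F : Type*} [Field F] {k n : ℕ}
    (G : Matrix (Fin k) (Fin n) (Polynomial F)) : Prop :=
  isBasic G ∧ ∀ G' : Matrix (Fin k) (Fin n) (Polynomial F),
    isBasic G' → convCode G' = convCode G → convDegree G ≤ convDegree G'

/-- The weight of `v(D) ∈ F[D]^n`: the total number of nonzero coefficients. -/
def polyWeight {F : Type*} [Field F] [DecidableEq F] {n : ℕ}
    (v : Fin n → Polynomial F) : ℕ :=
  ∑ j : Fin n, (v j).support.card

open Polynomial Finset
open scoped Matrix

section GeneratorMatrix

variable {F : Type*} [Field F] {k n : ℕ}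

def coeffMatrix (G : Matrix (Fin k) (Fin n) F[X]) (ℓ : ℕ) : Matrix (Fin k) (Fin n) F :=
  fun i j => (G i j).coeff ℓ

/-- The leading row coefficient matrix `[G]ₕ`. -/
def highCoeffMatrix (G : Matrix (Fin k) (Fin n) F[X]) : Matrix (Fin k) (Fin n) F :=
  fun i j => (G i j).coeff (rowDegree G i)

theorem natDegree_le_rowDegree (G : Matrix (Fin k) (Fin n) F[X]) (i : Fin k) (j : Fin n) :
    (G i j).natDegree ≤ rowDegree G i :=
  le_sup (f := fun j => (G i j).natDegree) (mem_univ j)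

theorem row_mem_convCode (G : Matrix (Fin k) (Fin n) F[X]) (i : Fin k) : G i ∈ convCode G :=
  ⟨Pi.single i 1, fun j => by simp [Pi.single_apply]⟩

theorem exists_eq_mul_of_convCode_subset {G G' : Matrix (Fin k) (Fin n) F[X]}
    (h : convCode G' ⊆ convCode G) : ∃ U : Matrix (Fin k) (Fin k) F[X], G' = U * G := by
  choose U hU using fun i => h (row_mem_convCode G' i)
  exact ⟨Matrix.of U, Matrix.ext fun i j => hU i j⟩

/-- The predictable degree property of a generator matrix with full-rank `[G]ₕ`. -/
theorem exists_le_natDegree_sum_mul {G : Matrix (Fin k) (Fin n) F[X]}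
    (hG : LinearIndependent F (highCoeffMatrix G)) (u : Fin k → F[X]) {i₀ : Fin k}
    (hu : u i₀ ≠ 0) :
    ∃ j, (u i₀).natDegree + rowDegree G i₀ ≤ (∑ i, u i * G i j).natDegree := by
  classical
  set γ := rowDegree G
  obtain ⟨i₁, hi₁, hmax⟩ := ({i | u i ≠ 0} : Finset (Fin k)).exists_max_image
    (fun i => (u i).natDegree + γ i) ⟨i₀, by simpa using hu⟩
  set d := (u i₁).natDegree + γ i₁
  have hcoeff : ∀ i j, (u i * G i j).coeff d = (u i).coeff (d - γ i) * highCoeffMatrix G i j := by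
    intro i j
    by_cases hui : u i = 0
    · simp [hui]
    · have hle := hmax i (by simpa using hui)
      have h := coeff_mul_add_eq_of_natDegree_le (f := u i) (df := d - γ i) (by omega)
        (natDegree_le_rowDegree G i j)
      rwa [Nat.sub_add_cancel (by omega)] at h
  obtain ⟨j, hj⟩ : ∃ j, ∑ i, (u i).coeff (d - γ i) * highCoeffMatrix G i j ≠ 0 := by
    by_contra! h
    have h₁ := Fintype.linearIndependent_iff.mp hG (fun i => (u i).coeff (d - γ i))
      (funext fun j => by simpa [Finset.sum_apply] using h j) i₁
    simp only [d, Nat.add_sub_cancel, coeff_natDegree, leadingCoeff_eq_zero] at h₁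
    exact (by simpa using hi₁ : u i₁ ≠ 0) h₁
  refine ⟨j, (hmax i₀ (by simpa using hu)).trans (le_natDegree_of_ne_zero ?_)⟩
  rwa [finsetSum_coeff, Finset.sum_congr rfl fun i _ => hcoeff i j]

theorem Matrix.exists_perm_ne_zero_of_det_ne_zero {ι R : Type*} [Fintype ι] [DecidableEq ι]
    [CommRing R] {U : Matrix ι ι R} (h : U.det ≠ 0) : ∃ σ : Equiv.Perm ι, ∀ i, U (σ i) i ≠ 0 := by
  contrapose! h
  rw [Matrix.det_apply]
  refine Finset.sum_eq_zero fun σ _ => ?_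
  obtain ⟨i, hi⟩ := h σ
  exact smul_eq_zero_of_right _ (prod_eq_zero (mem_univ i) hi)

theorem isReduced_of_linearIndependent_highCoeffMatrix {G : Matrix (Fin k) (Fin n) F[X]}
    (hB : isBasic G) (hL : LinearIndependent F (highCoeffMatrix G)) : isReduced G := by
  refine ⟨hB, fun G' ⟨R', hR'⟩ hcode => ?_⟩
  obtain ⟨U, rfl⟩ := exists_eq_mul_of_convCode_subset hcode.subset
  obtain ⟨U', hU'⟩ := exists_eq_mul_of_convCode_subset hcode.symm.subset
  have hUU' : U * U' = 1 := by
    calc U * U' = U * U' * (U * G * R') := by rw [hR', Matrix.mul_one]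
      _ = U * (U' * (U * G)) * R' := by simp only [Matrix.mul_assoc]
      _ = 1 := by rw [← hU', hR']
  obtain ⟨σ, hσ⟩ :=
    Matrix.exists_perm_ne_zero_of_det_ne_zero (Matrix.det_ne_zero_of_right_inverse hUU')
  have hdeg : ∀ i, rowDegree G i ≤ rowDegree (U * G) (σ i) := fun i => by
    obtain ⟨j, hj⟩ := exists_le_natDegree_sum_mul hL (U (σ i)) (hσ i)
    exact le_add_self.trans (hj.trans (natDegree_le_rowDegree (U * G) (σ i) j))
  calc convDegree G ≤ ∑ i, rowDegree (U * G) (σ i) := sum_le_sum fun i _ => hdeg i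
    _ = convDegree (U * G) := Equiv.sum_comp σ _

theorem isBasic_of_coeffMatrix_mul {G : Matrix (Fin k) (Fin n) F[X]}
    (R : Matrix (Fin n) (Fin k) F)
    (h₀ : coeffMatrix G 0 * R = 1) (h : ∀ ℓ ≠ 0, coeffMatrix G ℓ * R = 0) : isBasic G := by
  refine ⟨R.map C, Matrix.ext fun i i' => Polynomial.ext fun ℓ => ?_⟩
  have hcoeff : ((G * R.map C) i i').coeff ℓ = (coeffMatrix G ℓ * R) i i' := by
    simp [Matrix.mul_apply, finsetSum_coeff, coeffMatrix]
  rw [hcoeff]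
  rcases eq_or_ne ℓ 0 with rfl | hℓ
  · rw [h₀, Matrix.one_apply, Matrix.one_apply]
    split_ifs <;> simp
  · rw [h ℓ hℓ, Matrix.one_apply]
    split_ifs <;> simp [coeff_one, hℓ]

theorem coeffRow_mem_of_mem_convCode (C : Submodule F (Fin n → F))
    {G : Matrix (Fin k) (Fin n) F[X]} (hG : ∀ ℓ i, coeffMatrix G ℓ i ∈ C)
    {v : Fin n → F[X]} (hv : v ∈ convCode G) (ℓ : ℕ) : (fun j => (v j).coeff ℓ) ∈ C := by
  obtain ⟨u, hu⟩ := hv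
  have hrow : (fun j => (v j).coeff ℓ)
      = ∑ i, ∑ x ∈ antidiagonal ℓ, (u i).coeff x.1 • coeffMatrix G x.2 i := by
    ext j
    simp [hu, finsetSum_coeff, coeff_mul, Finset.sum_apply, coeffMatrix]
  rw [hrow]
  exact C.sum_mem fun i _ => C.sum_mem fun x _ => C.smul_mem _ (hG _ _)

theorem hammingNorm_coeff_le_polyWeight [DecidableEq F] (v : Fin n → F[X]) (ℓ : ℕ) :
    hammingNorm (fun j => (v j).coeff ℓ) ≤ polyWeight v := by
  rw [hammingNorm, card_filter]
  refine sum_le_sum fun j _ => ?_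
  split_ifs with h
  · exact card_pos.mpr ⟨ℓ, mem_support_iff.mpr h⟩
  · exact Nat.zero_le _

theorem le_polyWeight_of_coeffMatrix_mem [DecidableEq F] (C : Submodule F (Fin n → F)) {d : ℕ}
    (hC : ∀ x ∈ C, x ≠ 0 → d ≤ hammingNorm x) {G : Matrix (Fin k) (Fin n) F[X]}
    (hG : ∀ ℓ i, coeffMatrix G ℓ i ∈ C) {v : Fin n → F[X]} (hv : v ∈ convCode G) (hv0 : v ≠ 0) :
    d ≤ polyWeight v := by
  obtain ⟨j, hj⟩ := Function.ne_iff.mp hv0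
  refine (hC _ (coeffRow_mem_of_mem_convCode C hG hv (v j).natDegree) fun h => hj ?_).trans
    (hammingNorm_coeff_le_polyWeight v _)
  exact leadingCoeff_eq_zero.mp (congrFun h j)

end GeneratorMatrix

theorem Matrix.exists_mul_eq_one_of_linearIndependent {F : Type*} [Field F] {m n : Type*}
    [Fintype m] [DecidableEq m] [Fintype n] {M : Matrix m n F}
    (hM : LinearIndependent F M) : ∃ N : Matrix n m F, M * N = 1 := by
  classical
  obtain ⟨g, hg⟩ := M.vecMulLinear.exists_leftInverse_of_injective
    (LinearMap.ker_eq_bot.mpr (Matrix.vecMul_injective_iff.mpr hM))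
  have hMt : Matrix.toLin' Mᵀ = M.vecMulLinear := by
    ext
    simp
  refine ⟨(LinearMap.toMatrix' g)ᵀ, ?_⟩
  rw [← Matrix.transpose_transpose M, ← Matrix.transpose_mul, ← LinearMap.toMatrix'_toLin' Mᵀ,
    ← LinearMap.toMatrix'_comp, hMt, hg, LinearMap.toMatrix'_id, Matrix.transpose_one]

section StackedGenerator

variable {F : Type*} [Field F] {k n K : ℕ} (M : Matrix (Fin K) (Fin n) F) (γ : Fin k → ℕ)
  (φ : (Σ i, Fin (γ i + 1)) → Fin K)

noncomputable def stackedGenerator : Matrix (Fin k) (Fin n) F[X] :=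
  fun i j => ∑ ℓ : Fin (γ i + 1), monomial ℓ (M (φ ⟨i, ℓ⟩) j)

theorem coeffMatrix_stackedGenerator (i : Fin k) (ℓ : Fin (γ i + 1)) :
    coeffMatrix (stackedGenerator M γ φ) ℓ i = M (φ ⟨i, ℓ⟩) := by
  ext j
  simp [coeffMatrix, stackedGenerator, finsetSum_coeff, coeff_monomial, Fin.val_inj]

theorem coeffMatrix_stackedGenerator_of_lt {i : Fin k} {ℓ : ℕ} (hℓ : γ i < ℓ) :
    coeffMatrix (stackedGenerator M γ φ) ℓ i = 0 := by
  ext j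
  simp only [coeffMatrix, stackedGenerator, finsetSum_coeff, coeff_monomial]
  exact sum_eq_zero fun ℓ' _ => if_neg (by omega)

theorem natDegree_stackedGenerator_le (i : Fin k) (j : Fin n) :
    (stackedGenerator M γ φ i j).natDegree ≤ γ i :=
  natDegree_sum_le_of_forall_le _ _ fun ℓ _ =>
    (natDegree_monomial_le _).trans (Nat.lt_succ_iff.mp ℓ.isLt)

theorem rowDegree_stackedGenerator (hM : ∀ s, M s ≠ 0) (i : Fin k) :
    rowDegree (stackedGenerator M γ φ) i = γ i := by
  refine le_antisymm (Finset.sup_le fun j _ => natDegree_stackedGenerator_le M γ φ i j) ?_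
  obtain ⟨j, hj⟩ := Function.ne_iff.mp (hM (φ ⟨i, Fin.last _⟩))
  have hlead : (stackedGenerator M γ φ i j).coeff (γ i) ≠ 0 := by
    have h := congrFun (coeffMatrix_stackedGenerator M γ φ i (Fin.last _)) j
    rw [coeffMatrix, Fin.val_last] at h
    rw [h]
    exact hj
  exact (le_natDegree_of_ne_zero hlead).trans (natDegree_le_rowDegree _ i j)

theorem highCoeffMatrix_stackedGenerator (hM : ∀ s, M s ≠ 0) :
    highCoeffMatrix (stackedGenerator M γ φ) = fun i => M (φ ⟨i, Fin.last _⟩) := by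
  ext i j
  rw [highCoeffMatrix, rowDegree_stackedGenerator M γ φ hM]
  exact congrFun (coeffMatrix_stackedGenerator M γ φ i (Fin.last _)) j

theorem coeffMatrix_stackedGenerator_mul (hφ : Function.Injective φ) {N : Matrix (Fin n) (Fin K) F}
    (hN : M * N = 1) (ℓ : ℕ) (i i' : Fin k) :
    (coeffMatrix (stackedGenerator M γ φ) ℓ * N.submatrix id fun i => φ ⟨i, 0⟩) i i'
      = if i = i' ∧ ℓ = 0 then 1 else 0 := by
  rw [Matrix.mul_apply]
  by_cases hℓ : ℓ ≤ γ i
  · simp only [coeffMatrix_stackedGenerator M γ φ i ⟨ℓ, Nat.lt_succ_of_le hℓ⟩,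
      Matrix.submatrix_apply, id, ← Matrix.mul_apply, hN, Matrix.one_apply]
    refine if_congr (hφ.eq_iff.trans ⟨?_, ?_⟩) rfl rfl
    · intro h
      obtain ⟨rfl, h⟩ := Sigma.mk.inj_iff.mp h
      exact ⟨rfl, by simpa [Fin.ext_iff] using h⟩
    · rintro ⟨rfl, rfl⟩
      rfl
  · simp only [coeffMatrix_stackedGenerator_of_lt M γ φ (not_le.mp hℓ), Pi.zero_apply,
      zero_mul, sum_const_zero]
    rw [if_neg (by omega)]

theorem isReduced_stackedGenerator (hM : LinearIndependent F M) (hφ : Function.Injective φ) :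
    isReduced (stackedGenerator M γ φ) := by
  obtain ⟨N, hN⟩ := Matrix.exists_mul_eq_one_of_linearIndependent hM
  refine isReduced_of_linearIndependent_highCoeffMatrix
    (isBasic_of_coeffMatrix_mul (N.submatrix id fun i => φ ⟨i, 0⟩) ?_ fun ℓ hℓ => ?_) ?_
  · ext i i'
    simp [coeffMatrix_stackedGenerator_mul M γ φ hφ hN, Matrix.one_apply]
  · ext i i'
    simp [coeffMatrix_stackedGenerator_mul M γ φ hφ hN, hℓ]
  · rw [highCoeffMatrix_stackedGenerator M γ φ hM.ne_zero]
    exact hM.comp _ fun i i' h => congrArg Sigma.fst (hφ h)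

theorem le_polyWeight_of_mem_convCode_stackedGenerator [DecidableEq F] {d : ℕ}
    (hd : ∀ c : Fin K → F, c ≠ 0 → d ≤ hammingNorm (∑ s, c s • M s))
    {v : Fin n → F[X]} (hv : v ∈ convCode (stackedGenerator M γ φ)) (hv0 : v ≠ 0) :
    d ≤ polyWeight v := by
  refine le_polyWeight_of_coeffMatrix_mem (Submodule.span F (Set.range M)) ?_ (fun ℓ i => ?_) hv hv0
  · intro x hx hx0
    obtain ⟨c, rfl⟩ := (Submodule.mem_span_range_iff_exists_fun F).mp hx
    exact hd c fun hc => hx0 (by simp [hc])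
  · by_cases hℓ : ℓ ≤ γ i
    · rw [coeffMatrix_stackedGenerator M γ φ i ⟨ℓ, Nat.lt_succ_of_le hℓ⟩]
      exact Submodule.subset_span ⟨_, rfl⟩
    · rw [coeffMatrix_stackedGenerator_of_lt M γ φ (not_le.mp hℓ)]
      exact zero_mem _

end StackedGenerator

theorem exists_isReduced_rowDegree_eq_le_polyWeight {F : Type*} [Field F] [DecidableEq F]
    {k n K d : ℕ} (M : Matrix (Fin K) (Fin n) F)
    (hd : ∀ c : Fin K → F, c ≠ 0 → d ≤ hammingNorm (∑ s, c s • M s)) (hd₀ : 0 < d)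
    (γ : Fin k → ℕ) (hγ : ∑ i, (γ i + 1) ≤ K) :
    ∃ G : Matrix (Fin k) (Fin n) F[X], isReduced G ∧ (∀ i, rowDegree G i = γ i) ∧
      ∀ v ∈ convCode G, v ≠ 0 → d ≤ polyWeight v := by
  have hM : LinearIndependent F M := Fintype.linearIndependent_iff.mpr fun c hc => by
    by_contra! h
    simpa [hc] using hd₀.trans_le (hd c (Function.ne_iff.mpr h))
  obtain ⟨φ⟩ := Function.Embedding.nonempty_of_card_le (α := Σ i, Fin (γ i + 1)) (β := Fin K)
    (by simpa using hγ)
  exact ⟨stackedGenerator M γ φ, isReduced_stackedGenerator M γ φ hM φ.injective,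
    rowDegree_stackedGenerator M γ φ hM.ne_zero,
    fun v hv hv0 => le_polyWeight_of_mem_convCode_stackedGenerator M γ φ hd hv hv0⟩

theorem hammingNorm_comp_equiv {ι ι' β : Type*} [Fintype ι] [Fintype ι'] [Zero β] [DecidableEq β]
    (x : ι' → β) (e : ι ≃ ι') : hammingNorm (x ∘ e) = hammingNorm x :=
  card_equiv e (by simp)

section ExtendedReedSolomon

variable {F : Type*} [Field F] [Fintype F] [DecidableEq F]

/-- Viewed as a form of degree `N`, `f` has at most `N` zeros on the projective line, the point at
infinity being a zero iff `f.coeff N = 0`. -/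
theorem card_roots_add_ite_coeff_le {f : F[X]} (hf : f ≠ 0) {N : ℕ} (hN : f.natDegree ≤ N) :
    #{x | f.eval x = 0} + (if f.coeff N = 0 then 1 else 0) ≤ N := by
  have hroots : #{x | f.eval x = 0} ≤ f.natDegree :=
    card_le_degree_of_subset_roots fun x hx => by simpa [mem_roots hf] using hx
  split_ifs with h
  · have : f.natDegree ≠ N := fun hN' => hf (leadingCoeff_eq_zero.mp (by rwa [leadingCoeff, hN']))
    omega
  · omega

variable (F) in
/-- Column `some x` evaluates `∑ₛ cₛ Xˢ` at `x`, column `none` evaluates it at infinity, i.e. reads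
off the coefficient of `X ^ (K - 1)`. -/
def extendedRSMatrix (K : ℕ) : Matrix (Fin K) (Option F) F
  | s, none => if (s : ℕ) + 1 = K then 1 else 0
  | s, some x => x ^ (s : ℕ)

theorem card_sub_le_hammingNorm_extendedRS {K : ℕ} {c : Fin K → F} (hc : c ≠ 0) :
    Fintype.card (Option F) - (K - 1) ≤ hammingNorm (∑ s, c s • extendedRSMatrix F K s) := by
  set w := ∑ s, c s • extendedRSMatrix F K s
  set f : F[X] := ∑ s, C (c s) * X ^ (s : ℕ)
  obtain ⟨s₀, hs₀⟩ := Function.ne_iff.mp hc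
  have hK : 0 < K := s₀.pos
  have hcoeff : ∀ s : Fin K, f.coeff s = c s := fun s => by
    simp [f, finsetSum_coeff, Fin.val_inj]
  have hf : f ≠ 0 := fun h => hs₀ (by simpa [h] using (hcoeff s₀).symm)
  have hdeg : f.natDegree ≤ K - 1 := natDegree_sum_le_of_forall_le _ _ fun s _ =>
    (natDegree_C_mul_X_pow_le _ _).trans (by omega)
  have hsome : ∀ x, w (some x) = f.eval x := fun x => by
    simp [w, f, eval_finsetSum, extendedRSMatrix]
  have hnone : w none = f.coeff (K - 1) := by
    rw [show f.coeff (K - 1) = c ⟨K - 1, by omega⟩ from hcoeff ⟨K - 1, by omega⟩]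
    simp only [w, Finset.sum_apply, Pi.smul_apply, extendedRSMatrix, smul_eq_mul]
    rw [sum_eq_single ⟨K - 1, by omega⟩ (fun s _ hs => ?_) (by simp)]
    · simp [Nat.sub_add_cancel hK]
    · rw [if_neg fun h => hs (Fin.ext (by simp; omega)), mul_zero]
  have hzeros : #{o | w o = 0} = #{x | f.eval x = 0} + if f.coeff (K - 1) = 0 then 1 else 0 := by
    rw [card_filter, card_filter, Fintype.sum_option, hnone, add_comm]
    simp only [hsome]
  have hsplit := card_filter_add_card_filter_not (s := univ) fun o => w o = 0
  have := card_roots_add_ite_coeff_le hf hdeg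
  rw [card_univ] at hsplit
  rw [hammingNorm]
  simp only [ne_eq]
  omega

theorem card_sub_le_hammingNorm_extendedRS_submatrix {ι : Type*} [Fintype ι] (e : ι ≃ Option F)
    {K : ℕ} {c : Fin K → F} (hc : c ≠ 0) :
    Fintype.card ι - (K - 1)
      ≤ hammingNorm (∑ s, c s • (extendedRSMatrix F K).submatrix id e s) := by
  have hcomp : ∑ s, c s • (extendedRSMatrix F K).submatrix id e s
      = (∑ s, c s • extendedRSMatrix F K s) ∘ e := by
    ext j
    simp [Finset.sum_apply]
  rw [hcomp, hammingNorm_comp_equiv, Fintype.card_congr e]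
  exact card_sub_le_hammingNorm_extendedRS hc

end ExtendedReedSolomon

theorem sum_ite_val_lt_two {N : ℕ} (hN : 2 ≤ N) (m : ℕ) :
    ∑ i : Fin N, (if (i : ℕ) < 2 then m else 0) = 2 * m := by
  obtain ⟨N, rfl⟩ := Nat.exists_eq_add_of_le' hN
  simp [Fin.sum_univ_succ]
  ring

theorem sup_ite_val_lt_two {N : ℕ} (hN : 0 < N) (m : ℕ) :
    (univ.sup fun i : Fin N => if (i : ℕ) < 2 then m else 0) = m :=
  le_antisymm (Finset.sup_le fun i _ => by split_ifs <;> omega)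
    (le_sup_of_le (mem_univ ⟨0, hN⟩) (by simp))

theorem multi_memory_convolutional_general (q n a r m : ℕ) (hn : n = q + 1) (ha : a = n / 2)
    (hr : 1 ≤ r) (hrm2 : r + m ≤ a - 1)
    (F : Type*) [Field F] [Fintype F] [DecidableEq F] (hF : Fintype.card F = q) :
    ∃ G : Matrix (Fin (2 * r + 1)) (Fin n) (Polynomial F),
      isReduced G ∧
      convDegree G = 2 * m ∧
      convMemory G = m ∧
      (∀ v ∈ convCode G, v ≠ 0 → n - 2 * (r + m) ≤ polyWeight v) := by
  set K := 2 * (r + m) + 1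
  set γ : Fin (2 * r + 1) → ℕ := fun i => if (i : ℕ) < 2 then m else 0
  have hcard : Fintype.card (Option F) = n := by rw [Fintype.card_option, hF, hn]
  set e : Fin n ≃ Option F := (Fintype.equivFinOfCardEq hcard).symm
  have hd : ∀ c : Fin K → F, c ≠ 0 →
      n - 2 * (r + m) ≤ hammingNorm (∑ s, c s • (extendedRSMatrix F K).submatrix id e s) :=
    fun c hc => by simpa [K] using card_sub_le_hammingNorm_extendedRS_submatrix e hc
  have hγ : ∑ i, (γ i + 1) ≤ K := by
    rw [sum_add_distrib, sum_ite_val_lt_two (by omega) m]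
    simp only [sum_const, card_univ, Fintype.card_fin, smul_eq_mul, mul_one]
    omega
  obtain ⟨G, hG, hrow, hdist⟩ :=
    exists_isReduced_rowDegree_eq_le_polyWeight _ hd (by omega) γ hγ
  refine ⟨G, hG, ?_, ?_, hdist⟩
  · simp only [convDegree, hrow]
    exact sum_ite_val_lt_two (by omega) m
  · simp only [convMemory, hrow]
    exact sup_ite_val_lt_two (by omega) m

theorem multi_memory_convolutional (p t q n a r m : ℕ) (hp : p.Prime) (hodd : Odd p)
    (ht : 2 ≤ t) (hq : q = p ^ t) (hn : n = q + 1) (ha : a = n / 2)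
    (hr : 1 ≤ r) (hm : 2 ≤ m) (hrm1 : 3 ≤ r + m) (hrm2 : r + m ≤ a - 1)
    (F : Type*) [Field F] [Fintype F] [DecidableEq F] (hF : Fintype.card F = q) :
    ∃ G : Matrix (Fin (2 * r + 1)) (Fin n) (Polynomial F),
      isReduced G ∧
      convDegree G = 2 * m ∧
      convMemory G = m ∧
      (∀ v ∈ convCode G, v ≠ 0 → n - 2 * (r + m) ≤ polyWeight v) :=
  multi_memory_convolutional_general q n a r m hn ha hr hrm2 F hF
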